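/- arXiv:2309.08459 — 2 statements merged into one kernel-verified Lean document; each statement's English description precedes it below -/
import Mathlib

section
/- Let d ≥ 3 be an integer. For every measurable function F : ℝ^{d-1} × ℝ → [0,∞], ∫₀^∞ (2√(2π r³))^{-1} [ ∫_{ℝ^{d-1}} (2π r)^{-(d-1)/2} e^{-‖x‖²/(2r)} F(x,r) dx ] dr = ∫_{ℝ^{d-1}} (Γ(d/2) / (2 π^{d/2} ‖x‖^{d})) [ ∫₀^∞ e^{-1/(2t)} (2^{d/2} Γ(d/2) t^{d/2+1})^{-1} F(x, t‖x‖²) dt ] dx, where all integrals are Lebesgue integrals of nonnegative functions (the outer r-integrals over (0,∞), the x-integrals over ℝ^{d-1}, equivalently over ℝ^{d-1}∖{0} since {0} is Lebesgue-null), with values in [0,∞]. -/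
open MeasureTheory Real Set
open scoped ENNReal

/-!
By Tonelli we may integrate in `r` first. For fixed `x ≠ 0` substitute `r = t‖x‖²`: the Itô
density `(2√(2πr³))⁻¹` times the Gaussian kernel is `(2(2π)^{d/2} r^{d/2+1})⁻¹ e^{-‖x‖²/(2r)}`,
and together with the Jacobian `‖x‖²` this splits as `‖x‖^{-d}` times a function of `t` alone;
the factor `Γ(d/2)` is inserted on both sides to make the `t`-density a probability density.
-/

theorem setLIntegral_Ioi_zero_eq_comp_mul_left {c : ℝ} (hc : 0 < c) (g : ℝ → ℝ≥0∞) :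
    ∫⁻ r in Ioi 0, g r = ∫⁻ t in Ioi 0, ENNReal.ofReal c * g (c * t) := by
  have hderiv (t : ℝ) : HasDerivWithinAt (c * ·) c (Ioi 0) t := by
    simpa using (hasDerivAt_id t).const_mul c |>.hasDerivWithinAt
  conv_lhs => rw [← image_const_mul_Ioi_zero hc]
  rw [lintegral_image_eq_lintegral_abs_deriv_mul measurableSet_Ioi (fun t _ => hderiv t)
    (mul_right_injective₀ hc.ne').injOn, abs_of_pos hc]

theorem lintegral_Ioi_mul_lintegral_eq_of_scaling {E : Type*}
    [MeasurableSpace E] {μ : Measure E} [SFinite μ] {a : ℝ → ℝ≥0∞} {b F : E × ℝ → ℝ≥0∞}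
    {σ : E → ℝ} {w : E → ℝ≥0∞} {q : ℝ → ℝ≥0∞} (ha : Measurable a) (hb : Measurable b)
    (hF : Measurable F) (hσ : ∀ᵐ x ∂μ, 0 < σ x) (hw : ∀ x, w x ≠ ∞)
    (hfactor : ∀ x, 0 < σ x → ∀ t, 0 < t →
      ENNReal.ofReal (σ x) * (a (σ x * t) * b (x, σ x * t)) = w x * q t) :
    ∫⁻ r in Ioi 0, a r * ∫⁻ x, b (x, r) * F (x, r) ∂μ
      = ∫⁻ x, w x * (∫⁻ t in Ioi 0, q t * F (x, t * σ x)) ∂μ := by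
  have hbF : Measurable fun z : E × ℝ => b z * F z := hb.mul hF
  calc ∫⁻ r in Ioi 0, a r * ∫⁻ x, b (x, r) * F (x, r) ∂μ
      = ∫⁻ r in Ioi 0, ∫⁻ x, a r * (b (x, r) * F (x, r)) ∂μ := by
        refine lintegral_congr fun r => (lintegral_const_mul _ ?_).symm
        exact hbF.comp measurable_prodMk_right
    _ = ∫⁻ x, (∫⁻ r in Ioi 0, a r * (b (x, r) * F (x, r))) ∂μ :=
        lintegral_lintegral_swap ((ha.comp measurable_fst).mul
          (hbF.comp measurable_swap)).aemeasurable
    _ = ∫⁻ x, w x * (∫⁻ t in Ioi 0, q t * F (x, t * σ x)) ∂μ := by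
        refine lintegral_congr_ae (hσ.mono fun x hx => ?_)
        dsimp only
        rw [setLIntegral_Ioi_zero_eq_comp_mul_left hx, ← lintegral_const_mul' _ _ (hw x)]
        refine setLIntegral_congr_fun measurableSet_Ioi fun t ht => ?_
        rw [mul_comm t, ← mul_assoc, ← mul_assoc, ← mul_assoc, ← hfactor x hx t ht]
        ring

theorem inv_two_mul_sqrt_mul_rpow_neg {a r : ℝ} (p : ℝ) (ha : 0 < a) (hr : 0 < r) :
    (2 * √(a * r ^ 3))⁻¹ * (a * r) ^ (-(p - 1) / 2) = (2 * a ^ (p / 2) * r ^ (p / 2 + 1))⁻¹ := by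
  have hsqrt : √(a * r ^ 3) = a ^ (1 / 2 : ℝ) * r ^ (3 / 2 : ℝ) := by
    rw [sqrt_eq_rpow, mul_rpow ha.le (by positivity), ← rpow_natCast, ← rpow_mul hr.le]
    norm_num
  have ha' : a ^ (-(p - 1) / 2) = a ^ (1 / 2 : ℝ) / a ^ (p / 2) := by
    rw [← rpow_sub ha]; ring_nf
  have hr' : r ^ (-(p - 1) / 2) = r ^ (3 / 2 : ℝ) / r ^ (p / 2 + 1) := by
    rw [← rpow_sub hr]; ring_nf
  rw [hsqrt, mul_rpow ha.le hr.le, ha', hr']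
  field_simp

theorem sq_mul_excursion_density_comp_sq_mul {p G s t : ℝ} (hG : G ≠ 0) (hs : 0 < s)
    (ht : 0 < t) :
    s ^ 2 * ((2 * √(2 * π * (s ^ 2 * t) ^ 3))⁻¹ *
      ((2 * π * (s ^ 2 * t)) ^ (-(p - 1) / 2) * exp (-s ^ 2 / (2 * (s ^ 2 * t)))))
    = G / (2 * π ^ (p / 2) * s ^ p) *
      (exp (-1 / (2 * t)) / ((2 : ℝ) ^ (p / 2) * G * t ^ (p / 2 + 1))) := by
  have hexp : -s ^ 2 / (2 * (s ^ 2 * t)) = -1 / (2 * t) := by field_simp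
  have hpow : (s ^ 2 * t) ^ (p / 2 + 1) = s ^ p * s ^ 2 * t ^ (p / 2 + 1) := by
    rw [mul_rpow (by positivity) ht.le, ← rpow_natCast, ← rpow_mul hs.le, Nat.cast_ofNat,
      show 2 * (p / 2 + 1) = p + 2 by ring, rpow_add hs, rpow_two]
  rw [← mul_assoc (2 * √_)⁻¹, inv_two_mul_sqrt_mul_rpow_neg p (by positivity) (by positivity),
    hexp, hpow, mul_rpow zero_le_two pi_pos.le]
  field_simp

/-- Disintegration of the Brownian excursion endpoint-and-duration measure
(Proposition 5.3): `n₊ = ∫ dx (Γ(d/2)/(2π^{d/2}‖x‖^d)) γ_x`, expressed as an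
equality of Lebesgue integrals against any nonnegative measurable `F`. -/
theorem excursion_measure_disintegration (d : ℕ) (hd : 3 ≤ d)
    (F : EuclideanSpace ℝ (Fin (d - 1)) × ℝ → ℝ≥0∞) (hF : Measurable F) :
    ∫⁻ r in Ioi (0 : ℝ),
        ENNReal.ofReal (2 * Real.sqrt (2 * Real.pi * r ^ 3))⁻¹ *
          ∫⁻ x : EuclideanSpace ℝ (Fin (d - 1)),
            ENNReal.ofReal
              ((2 * Real.pi * r) ^ (-((d : ℝ) - 1) / 2) *
                Real.exp (-‖x‖ ^ 2 / (2 * r))) * F (x, r)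
      = ∫⁻ x : EuclideanSpace ℝ (Fin (d - 1)),
          ENNReal.ofReal
            (Real.Gamma ((d : ℝ) / 2) /
              (2 * Real.pi ^ ((d : ℝ) / 2) * ‖x‖ ^ (d : ℝ))) *
            ∫⁻ t in Ioi (0 : ℝ),
              ENNReal.ofReal
                (Real.exp (-1 / (2 * t)) /
                  ((2 : ℝ) ^ ((d : ℝ) / 2) * Real.Gamma ((d : ℝ) / 2) *
                    t ^ ((d : ℝ) / 2 + 1))) *
                F (x, t * ‖x‖ ^ 2) := by
  -- in positive dimension `{0}` is a null set
  have : Nonempty (Fin (d - 1)) := ⟨⟨0, by omega⟩⟩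
  have hΓ : Real.Gamma ((d : ℝ) / 2) ≠ 0 := (Real.Gamma_pos_of_pos (by positivity)).ne'
  refine lintegral_Ioi_mul_lintegral_eq_of_scaling (σ := fun x => ‖x‖ ^ 2)
    (b := fun z => ENNReal.ofReal ((2 * π * z.2) ^ (-((d : ℝ) - 1) / 2) *
      exp (-‖z.1‖ ^ 2 / (2 * z.2)))) (by fun_prop) (by fun_prop) hF
    ((volume.ae_ne 0).mono fun x hx => by positivity) (fun _ => ENNReal.ofReal_ne_top) ?_
  intro x hx t ht
  have hs : 0 < ‖x‖ := (norm_nonneg x).lt_of_ne' (sq_pos_iff.mp hx)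
  rw [← ENNReal.ofReal_mul (by positivity), ← ENNReal.ofReal_mul (by positivity),
    ← ENNReal.ofReal_mul (by positivity), sq_mul_excursion_density_comp_sq_mul hΓ hs ht]
end

section
/- Let d ≥ 3 be an integer, α ∈ (0,2), and set ω = d − 1 + α/2. Let g : ℝ → [0,∞] be measurable. Then for every measurable function F : ℝ^{d-1} × ℝ → [0,∞], ∫₀^∞ (2√(2π r³))^{-1} [ ∫_{ℝ^{d-1}} r^{-(d-1)/α} g(r^{-1/α}‖x‖) F(x,r) dx ] dr = ∫_{ℝ^{d-1}} ‖x‖^{-ω} [ ∫₀^∞ (2√(2π))^{-1} u^{-(1+ω/α)} g(u^{-1/α}) F(x, u‖x‖^{α}) du ] dx, where all integrals are Lebesgue integrals of nonnegative functions (the r- and u-integrals over (0,∞), the x-integrals over ℝ^{d-1}, equivalently over ℝ^{d-1}∖{0} since {0} is Lebesgue-null), with values in [0,∞]. -/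
open MeasureTheory Real Set
open scoped ENNReal

/-! By Tonelli the duration and endpoint integrals may be swapped. For each `x ≠ 0` (hence for
a.e. `x`) substitute `r = u ‖x‖^α`: the Jacobian `‖x‖^α`, the homogeneity of degree `-3/2` of the
excursion duration density and the stable scaling factor `r^{-t/α}` combine into `‖x‖^{-ω}`
because `ω = t + α/2`, while `r^{-1/α} ‖x‖` becomes `u^{-1/α}`. -/

lemma setLIntegral_Ioi_eq_comp_mul_const {c : ℝ} (hc : 0 < c) (f : ℝ → ℝ≥0∞) :
    ∫⁻ r in Ioi (0 : ℝ), f r = ∫⁻ u in Ioi (0 : ℝ), ENNReal.ofReal c * f (u * c) := by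
  have := lintegral_image_eq_lintegral_abs_deriv_mul (measurableSet_Ioi (a := (0 : ℝ)))
    (fun u _ => (hasDerivAt_mul_const c).hasDerivWithinAt)
    (mul_left_injective₀ hc.ne').injOn f
  rwa [show (· * c) '' Ioi 0 = Ioi 0 by simpa using (OrderIso.mulRight₀ c hc).image_Ioi 0,
    abs_of_pos hc] at this

lemma sqrt_mul_pow_three {a r : ℝ} (ha : 0 ≤ a) (hr : 0 ≤ r) :
    √(a * r ^ 3) = √a * r ^ (3 / 2 : ℝ) := by
  rw [sqrt_mul ha, sqrt_eq_rpow (r ^ 3), ← rpow_natCast, ← rpow_mul hr]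
  norm_num

lemma excursion_kernel_rescale {α t ω n u : ℝ} (hα : 0 < α) (hω : ω = t + α / 2)
    (hn : 0 < n) (hu : 0 < u) :
    n ^ α * (2 * √(2 * π * (u * n ^ α) ^ 3))⁻¹ * (u * n ^ α) ^ (-t / α)
      = n ^ (-ω) * ((2 * √(2 * π))⁻¹ * u ^ (-(1 + ω / α))) := by
  have hc : 0 < n ^ α := rpow_pos_of_pos hn α
  have huc : 0 < u * n ^ α := mul_pos hu hc
  have hexp : -(3 / 2 : ℝ) + -t / α = -(1 + ω / α) := by
    rw [hω]; field_simp; ring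
  have hn_exp : α * (1 + -(1 + ω / α)) = -ω := by field_simp; ring
  calc n ^ α * (2 * √(2 * π * (u * n ^ α) ^ 3))⁻¹ * (u * n ^ α) ^ (-t / α)
      = (2 * √(2 * π))⁻¹ * (n ^ α * (u * n ^ α) ^ (-(3 / 2 : ℝ) + -t / α)) := by
        rw [sqrt_mul_pow_three (by positivity) huc.le, rpow_add huc, rpow_neg huc.le]; ring
    _ = (2 * √(2 * π))⁻¹ * ((n ^ α) ^ (1 + -(1 + ω / α)) * u ^ (-(1 + ω / α))) := by
        rw [hexp, mul_rpow hu.le hc.le, rpow_add hc, rpow_one]; ring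
    _ = n ^ (-ω) * ((2 * √(2 * π))⁻¹ * u ^ (-(1 + ω / α))) := by
        rw [← rpow_mul hn.le, hn_exp]; ring

lemma mul_rpow_neg_inv_mul_self {α n u : ℝ} (hα : 0 < α) (hn : 0 < n) (hu : 0 < u) :
    (u * n ^ α) ^ (-1 / α) * n = u ^ (-1 / α) := by
  rw [mul_rpow hu.le (rpow_pos_of_pos hn α).le, ← rpow_mul hn.le,
    show α * (-1 / α) = -1 by field_simp, rpow_neg_one]
  field_simp

lemma setLIntegral_Ioi_excursion_kernel_rescale {α t ω n : ℝ} (hα : 0 < α)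
    (hω : ω = t + α / 2) (hn : 0 < n) (g h : ℝ → ℝ≥0∞) :
    ∫⁻ r in Ioi (0 : ℝ), ENNReal.ofReal (2 * √(2 * π * r ^ 3))⁻¹ *
        (ENNReal.ofReal (r ^ (-t / α)) * g (r ^ (-1 / α) * n) * h r)
      = ENNReal.ofReal (n ^ (-ω)) * ∫⁻ u in Ioi (0 : ℝ),
          ENNReal.ofReal ((2 * √(2 * π))⁻¹ * u ^ (-(1 + ω / α))) *
            g (u ^ (-1 / α)) * h (u * n ^ α) := by
  rw [setLIntegral_Ioi_eq_comp_mul_const (rpow_pos_of_pos hn α),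
    ← lintegral_const_mul' _ _ ENNReal.ofReal_ne_top]
  refine setLIntegral_congr_fun measurableSet_Ioi fun u (hu : 0 < u) => ?_
  have hcoef : ENNReal.ofReal (n ^ α) * ENNReal.ofReal (2 * √(2 * π * (u * n ^ α) ^ 3))⁻¹ *
      ENNReal.ofReal ((u * n ^ α) ^ (-t / α))
        = ENNReal.ofReal (n ^ (-ω)) *
          ENNReal.ofReal ((2 * √(2 * π))⁻¹ * u ^ (-(1 + ω / α))) := by
    rw [← ENNReal.ofReal_mul (by positivity), ← ENNReal.ofReal_mul (by positivity),
      ← ENNReal.ofReal_mul (by positivity), excursion_kernel_rescale hα hω hn hu]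
  simp only [mul_rpow_neg_inv_mul_self hα hn hu, ← mul_assoc, hcoef]

lemma lintegral_excursion_disintegration {E : Type*} [NormedAddCommGroup E]
    [MeasurableSpace E] [BorelSpace E] (μ : Measure E) [SFinite μ] [NullSingletonClass μ]
    {α t ω : ℝ} (hα : 0 < α) (hω : ω = t + α / 2) {g : ℝ → ℝ≥0∞} (hg : Measurable g)
    {F : E × ℝ → ℝ≥0∞} (hF : Measurable F) :
    ∫⁻ r in Ioi (0 : ℝ), ENNReal.ofReal (2 * √(2 * π * r ^ 3))⁻¹ *
        ∫⁻ x, ENNReal.ofReal (r ^ (-t / α)) * g (r ^ (-1 / α) * ‖x‖) * F (x, r) ∂μ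
      = ∫⁻ x, ENNReal.ofReal (‖x‖ ^ (-ω)) * (∫⁻ u in Ioi (0 : ℝ),
          ENNReal.ofReal ((2 * √(2 * π))⁻¹ * u ^ (-(1 + ω / α))) *
            g (u ^ (-1 / α)) * F (x, u * ‖x‖ ^ α)) ∂μ := by
  have hmeas : Measurable fun p : ℝ × E => ENNReal.ofReal (2 * √(2 * π * p.1 ^ 3))⁻¹ *
      (ENNReal.ofReal (p.1 ^ (-t / α)) * g (p.1 ^ (-1 / α) * ‖p.2‖) * F (p.2, p.1)) := by
    fun_prop
  conv_lhs => enter [2, r]; rw [← lintegral_const_mul' _ _ ENNReal.ofReal_ne_top]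
  rw [lintegral_lintegral_swap hmeas.aemeasurable]
  refine lintegral_congr_ae ((μ.ae_ne 0).mono fun x hx => ?_)
  exact setLIntegral_Ioi_excursion_kernel_rescale hα hω (norm_pos_iff.mpr hx) _ _

theorem stable_excursion_measure_disintegration_general (d : ℕ) (hd : 3 ≤ d)
    (α : ℝ) (hα0 : 0 < α) (ω : ℝ) (hω : ω = (d : ℝ) - 1 + α / 2)
    (g : ℝ → ℝ≥0∞) (hg : Measurable g)
    (F : EuclideanSpace ℝ (Fin (d - 1)) × ℝ → ℝ≥0∞) (hF : Measurable F) :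
    ∫⁻ r in Ioi (0 : ℝ),
        ENNReal.ofReal (2 * Real.sqrt (2 * Real.pi * r ^ 3))⁻¹ *
          ∫⁻ x : EuclideanSpace ℝ (Fin (d - 1)),
            ENNReal.ofReal (r ^ (-((d : ℝ) - 1) / α)) *
              g (r ^ (-1 / α) * ‖x‖) * F (x, r)
      = ∫⁻ x : EuclideanSpace ℝ (Fin (d - 1)),
          ENNReal.ofReal (‖x‖ ^ (-ω)) *
            ∫⁻ u in Ioi (0 : ℝ),
              ENNReal.ofReal
                ((2 * Real.sqrt (2 * Real.pi))⁻¹ * u ^ (-(1 + ω / α))) *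
                g (u ^ (-1 / α)) * F (x, u * ‖x‖ ^ α) := by
  have : Nonempty (Fin (d - 1)) := ⟨⟨0, by omega⟩⟩
  exact lintegral_excursion_disintegration volume hα0 hω hg hF

/-- Disintegration over the endpoint of the excursion measure `n₊^α` of the
process `Z^d = (X^{d-1}, Z)` (Proposition 5.10): endpoint weight proportional
to `‖x‖^{-ω_d}`, `ω_d = d − 1 + α/2`, with rescaled duration `u = r/‖x‖^α`. -/
theorem stable_excursion_measure_disintegration (d : ℕ) (hd : 3 ≤ d)
    (α : ℝ) (hα0 : 0 < α) (hα2 : α < 2) (ω : ℝ) (hω : ω = (d : ℝ) - 1 + α / 2)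
    (g : ℝ → ℝ≥0∞) (hg : Measurable g)
    (F : EuclideanSpace ℝ (Fin (d - 1)) × ℝ → ℝ≥0∞) (hF : Measurable F) :
    ∫⁻ r in Ioi (0 : ℝ),
        ENNReal.ofReal (2 * Real.sqrt (2 * Real.pi * r ^ 3))⁻¹ *
          ∫⁻ x : EuclideanSpace ℝ (Fin (d - 1)),
            ENNReal.ofReal (r ^ (-((d : ℝ) - 1) / α)) *
              g (r ^ (-1 / α) * ‖x‖) * F (x, r)
      = ∫⁻ x : EuclideanSpace ℝ (Fin (d - 1)),
          ENNReal.ofReal (‖x‖ ^ (-ω)) *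
            ∫⁻ u in Ioi (0 : ℝ),
              ENNReal.ofReal
                ((2 * Real.sqrt (2 * Real.pi))⁻¹ * u ^ (-(1 + ω / α))) *
                g (u ^ (-1 / α)) * F (x, u * ‖x‖ ^ α) :=
  stable_excursion_measure_disintegration_general d hd α hα0 ω hω g hg F hF
end
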